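/- t-evolution of the moments of a KdV vessel (bounded case): in the bounded KdV vessel setting, define H_n(x,t) := C(x,t)∘X(x,t)⁻¹∘Aⁿ∘B(x,t) : ℂ² → ℂ² for every n ∈ ℕ. Then for all n and all (x,t) ∈ ℝ², ∂ₜ H_n(x,t) = i ∂ₓ H_{n+1}(x,t) + i ∂ₓ[H₀](x,t) σ₁ H_n(x,t). -/

import Mathlib

/-!
With `K = X⁻¹`, conjugating the Lyapunov equation by `K` gives `Aζ K = -K A - K B σ₁ C K`.
This removes `Aζ` from the derivatives of `H_n = C K Aⁿ B`: `∂ₓ H_n` becomes an explicit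
polynomial in `H₀`, `H_n`, `H_{n+1}` and the `σ`'s, and `∂ₜ H_n`, computed in the same way,
agrees with `i ∂ₓH_{n+1} + i ∂ₓH₀ σ₁ H_n` once `σ₁⁻¹ σ₁ = 1` is used.
-/

open ContinuousLinearMap

theorem HasDerivAt.clm_comp_of_isScalarTower {𝕜 𝕜' : Type*} [NontriviallyNormedField 𝕜]
    [NontriviallyNormedField 𝕜'] [NormedAlgebra 𝕜 𝕜']
    {E F G : Type*} [NormedAddCommGroup E] [NormedSpace 𝕜' E] [NormedSpace 𝕜 E]
    [IsScalarTower 𝕜 𝕜' E] [NormedAddCommGroup F] [NormedSpace 𝕜' F] [NormedSpace 𝕜 F]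
    [IsScalarTower 𝕜 𝕜' F] [NormedAddCommGroup G] [NormedSpace 𝕜' G] [NormedSpace 𝕜 G]
    [IsScalarTower 𝕜 𝕜' G]
    {c : 𝕜 → F →L[𝕜'] G} {c' : F →L[𝕜'] G} {d : 𝕜 → E →L[𝕜'] F} {d' : E →L[𝕜'] F} {x : 𝕜}
    (hc : HasDerivAt c c' x) (hd : HasDerivAt d d' x) :
    HasDerivAt (fun y => (c y).comp (d y)) (c'.comp (d x) + (c x).comp d') x := by
  simpa [add_comm] using
    ((compL 𝕜' E F G).bilinearRestrictScalars 𝕜).hasDerivAt_of_bilinear (fun _ => hc) fun _ => hd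

theorem HasDerivAt.inverse_of_mul_eq_one {𝕜 R : Type*} [NontriviallyNormedField 𝕜]
    [NormedRing R] [NormedAlgebra 𝕜 R] [HasSummableGeomSeries R]
    {f g : 𝕜 → R} {f' : R} {x : 𝕜}
    (hf : HasDerivAt f f' x) (hfg : ∀ y, f y * g y = 1) (hgf : ∀ y, g y * f y = 1) :
    HasDerivAt g (-(g x * f' * g x)) x := by
  let u : 𝕜 → Rˣ := fun y => ⟨f y, g y, hfg y, hgf y⟩
  have hg : Ring.inverse ∘ f = g := funext fun y => Ring.inverse_unit (u y)
  have h := (hasFDerivAt_ringInverse (𝕜 := 𝕜) (u x)).comp_hasDerivAt x hf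
  rw [hg] at h
  exact h.congr_deriv (by simp only [neg_apply, mulLeftRight_apply]; rfl)

theorem mul_inverse_eq_of_sylvester {R : Type*} [Ring R] {a b q x k : R}
    (h : a * x + x * b + q = 0) (hxk : x * k = 1) (hkx : k * x = 1) :
    b * k = -(k * a) - k * q * k := by
  have hxb : x * b = -(a * x) - q := by rw [← sub_eq_zero, ← h]; abel
  calc b * k = k * (x * b) * k := by rw [← mul_assoc, hkx, one_mul]
    _ = -(k * a) - k * q * k := by
      rw [hxb]; simp only [sub_mul, mul_sub, neg_mul, mul_neg, mul_assoc, hxk, mul_one]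

def vesselMomentDerivX {R : Type*} [Ring R] (σ₁ σ₁inv σ₂ γ : R) (h : ℕ → R) (n : ℕ) : R :=
  σ₁inv * σ₂ * (h (n + 1) + h 0 * σ₁ * h n) + σ₁inv * γ * h n - h 0 * σ₂ * h n
    - h (n + 1) * σ₂ * σ₁inv - h n * γ * σ₁inv

section Vessel

variable {V H : Type*} [NormedAddCommGroup V] [NormedSpace ℂ V]
  [NormedAddCommGroup H] [NormedSpace ℂ H]

def vesselMoment (C : H →L[ℂ] V) (K A : H →L[ℂ] H) (B : V →L[ℂ] H) (n : ℕ) : V →L[ℂ] V :=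
  C ∘L (K ∘L ((A ^ n) ∘L B))

theorem HasDerivAt.vesselMoment {A : H →L[ℂ] H} {B : ℝ → V →L[ℂ] H} {C : ℝ → H →L[ℂ] V}
    {K : ℝ → H →L[ℂ] H} {B' : V →L[ℂ] H} {C' : H →L[ℂ] V} {K' : H →L[ℂ] H} {x : ℝ}
    (hC : HasDerivAt C C' x) (hK : HasDerivAt K K' x) (hB : HasDerivAt B B' x) (n : ℕ) :
    HasDerivAt (fun y => vesselMoment (C y) (K y) A (B y) n)
      (C' ∘L (K x ∘L ((A ^ n) ∘L B x))
        + C x ∘L (K' ∘L ((A ^ n) ∘L B x) + K x ∘L ((A ^ n) ∘L B'))) x := by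
  have hAB : HasDerivAt (fun y => (A ^ n) ∘L B y) ((A ^ n) ∘L B') x := by
    simpa using (hasDerivAt_const x (A ^ n)).clm_comp_of_isScalarTower hB
  exact hC.clm_comp_of_isScalarTower (hK.clm_comp_of_isScalarTower hAB)

theorem pow_comp_comp_comm (A : H →L[ℂ] H) (n : ℕ) (M : V →L[ℂ] H) :
    (A ^ n) ∘L (A ∘L M) = A ∘L ((A ^ n) ∘L M) := by
  rw [← comp_assoc, ← comp_assoc, ← mul_def, ← mul_def, pow_mul_comm']

theorem comp_inverse_comp_of_lyapunov {σ₁ : V →L[ℂ] V} {A Aζ X K : H →L[ℂ] H}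
    {B : V →L[ℂ] H} {C : H →L[ℂ] V} (hXK : X ∘L K = 1) (hKX : K ∘L X = 1)
    (hLyap : A ∘L X + X ∘L Aζ + (B ∘L σ₁) ∘L C = 0) (M : V →L[ℂ] H) :
    Aζ ∘L (K ∘L M) = -(K ∘L (A ∘L M)) - K ∘L (B ∘L (σ₁ ∘L (C ∘L (K ∘L M)))) := by
  have h := congrArg (· ∘L M) (mul_inverse_eq_of_sylvester (R := H →L[ℂ] H) hLyap hXK hKX)
  simpa only [mul_def, sub_comp, neg_comp, comp_assoc] using h

theorem hasDerivAt_vesselMoment_x [CompleteSpace H] {σ₁ σ₁inv σ₂ γ : V →L[ℂ] V}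
    {A Aζ : H →L[ℂ] H} {B : ℝ → V →L[ℂ] H} {C : ℝ → H →L[ℂ] V} {X K : ℝ → H →L[ℂ] H} {x : ℝ}
    (hXK : ∀ y, X y ∘L K y = 1) (hKX : ∀ y, K y ∘L X y = 1)
    (hB : HasDerivAt B ((-((A ∘L B x) ∘L σ₂ + B x ∘L γ)) ∘L σ₁inv) x)
    (hC : HasDerivAt C (σ₁inv ∘L (-(σ₂ ∘L (C x ∘L Aζ)) + γ ∘L C x)) x)
    (hX : HasDerivAt X ((B x ∘L σ₂) ∘L C x) x)
    (hLyap : A ∘L X x + X x ∘L Aζ + (B x ∘L σ₁) ∘L C x = 0) (n : ℕ) :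
    HasDerivAt (fun y => vesselMoment (C y) (K y) A (B y) n)
      (vesselMomentDerivX σ₁ σ₁inv σ₂ γ (vesselMoment (C x) (K x) A (B x)) n) x := by
  refine ((hC.vesselMoment (hX.inverse_of_mul_eq_one hXK hKX) hB) n).congr_deriv ?_
  have hAζ := comp_inverse_comp_of_lyapunov (hXK x) (hKX x) hLyap
  simp only [vesselMomentDerivX, vesselMoment, pow_succ', pow_zero, one_def, id_comp, mul_def,
    comp_add, add_comp, comp_sub, comp_neg, neg_comp, comp_assoc, hAζ, pow_comp_comp_comm]
  abel

theorem hasDerivAt_vesselMoment_t [CompleteSpace H] {σ₁ σ₁inv σ₂ γ : V →L[ℂ] V}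
    {A Aζ : H →L[ℂ] H} {B : ℝ → V →L[ℂ] H} {C : ℝ → H →L[ℂ] V} {X K : ℝ → H →L[ℂ] H} {t : ℝ}
    (hσ₁ : σ₁inv ∘L σ₁ = 1) (hXK : ∀ s, X s ∘L K s = 1) (hKX : ∀ s, K s ∘L X s = 1)
    (hB : HasDerivAt B ((-Complex.I) • (A ∘L (((A ∘L B t) ∘L σ₂ + B t ∘L γ) ∘L σ₁inv))) t)
    (hC : HasDerivAt C ((-Complex.I) • ((σ₁inv ∘L (-(σ₂ ∘L (C t ∘L Aζ)) + γ ∘L C t)) ∘L Aζ)) t)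
    (hX : HasDerivAt X (Complex.I • (A ∘L ((B t ∘L σ₂) ∘L C t)
      - ((B t ∘L σ₂) ∘L C t) ∘L Aζ + (B t ∘L γ) ∘L C t)) t)
    (hLyap : A ∘L X t + X t ∘L Aζ + (B t ∘L σ₁) ∘L C t = 0) (n : ℕ) :
    HasDerivAt (fun s => vesselMoment (C s) (K s) A (B s) n)
      (Complex.I • vesselMomentDerivX σ₁ σ₁inv σ₂ γ (vesselMoment (C t) (K t) A (B t)) (n + 1)
        + Complex.I • (vesselMomentDerivX σ₁ σ₁inv σ₂ γ (vesselMoment (C t) (K t) A (B t)) 0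
          * σ₁ * vesselMoment (C t) (K t) A (B t) n)) t := by
  refine ((hC.vesselMoment (hX.inverse_of_mul_eq_one hXK hKX) hB) n).congr_deriv ?_
  have hAζ := comp_inverse_comp_of_lyapunov (hXK t) (hKX t) hLyap
  have hσ : ∀ M : V →L[ℂ] V, σ₁inv ∘L (σ₁ ∘L M) = M := fun M => by
    rw [← comp_assoc, hσ₁, one_def, id_comp]
  simp only [vesselMomentDerivX, vesselMoment, pow_succ', pow_zero, one_def, id_comp, mul_def,
    comp_add, add_comp, comp_sub, sub_comp, comp_neg, neg_comp, comp_smul, smul_comp, comp_assoc,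
    hAζ, hσ, pow_comp_comp_comm]
  module

end Vessel

theorem kdv_moment_t_evolution_general
    {H : Type*} [NormedAddCommGroup H] [InnerProductSpace ℂ H] [CompleteSpace H]
    (σ₁ σ₁inv σ₂ γ : (Fin 2 → ℂ) →L[ℂ] (Fin 2 → ℂ))
    (hσ₁inv : σ₁inv ∘L σ₁ = 1)
    (A Aζ : H →L[ℂ] H)
    (B : ℝ → ℝ → ((Fin 2 → ℂ) →L[ℂ] H))
    (C : ℝ → ℝ → (H →L[ℂ] (Fin 2 → ℂ)))
    (X Xinv : ℝ → ℝ → (H →L[ℂ] H))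
    (hXinv : ∀ x t : ℝ, X x t ∘L Xinv x t = 1)
    (hXinv' : ∀ x t : ℝ, Xinv x t ∘L X x t = 1)
    (hBx : ∀ x t : ℝ, HasDerivAt (fun y => B y t)
      ((-((A ∘L B x t) ∘L σ₂ + B x t ∘L γ)) ∘L σ₁inv) x)
    (hCx : ∀ x t : ℝ, HasDerivAt (fun y => C y t)
      (σ₁inv ∘L (-(σ₂ ∘L (C x t ∘L Aζ)) + γ ∘L C x t)) x)
    (hXx : ∀ x t : ℝ, HasDerivAt (fun y => X y t) ((B x t ∘L σ₂) ∘L C x t) x)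
    (hBt : ∀ x t : ℝ, HasDerivAt (fun s => B x s)
      ((-Complex.I) • (A ∘L (((A ∘L B x t) ∘L σ₂ + B x t ∘L γ) ∘L σ₁inv))) t)
    (hCt : ∀ x t : ℝ, HasDerivAt (fun s => C x s)
      ((-Complex.I) • ((σ₁inv ∘L (-(σ₂ ∘L (C x t ∘L Aζ)) + γ ∘L C x t)) ∘L Aζ)) t)
    (hXt : ∀ x t : ℝ, HasDerivAt (fun s => X x s)
      (Complex.I • (A ∘L ((B x t ∘L σ₂) ∘L C x t)
        - ((B x t ∘L σ₂) ∘L C x t) ∘L Aζ + (B x t ∘L γ) ∘L C x t)) t)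
    (hLyap : ∀ x t : ℝ, A ∘L X x t + X x t ∘L Aζ + (B x t ∘L σ₁) ∘L C x t = 0) :
    ∃ Hx : ℕ → ℝ → ℝ → ((Fin 2 → ℂ) →L[ℂ] (Fin 2 → ℂ)),
      (∀ (n : ℕ) (x t : ℝ),
        HasDerivAt (fun y => C y t ∘L (Xinv y t ∘L ((A ^ n) ∘L B y t))) (Hx n x t) x) ∧
      (∀ (n : ℕ) (x t : ℝ),
        HasDerivAt (fun s => C x s ∘L (Xinv x s ∘L ((A ^ n) ∘L B x s)))
          (Complex.I • Hx (n + 1) x t +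
            Complex.I • ((Hx 0 x t ∘L σ₁) ∘L
              (C x t ∘L (Xinv x t ∘L ((A ^ n) ∘L B x t))))) t) := by
  refine ⟨fun n x t =>
    vesselMomentDerivX σ₁ σ₁inv σ₂ γ (vesselMoment (C x t) (Xinv x t) A (B x t)) n,
    fun n x t => ?_, fun n x t => ?_⟩
  · exact hasDerivAt_vesselMoment_x (hXinv · t) (hXinv' · t) (hBx x t) (hCx x t) (hXx x t)
      (hLyap x t) n
  · exact hasDerivAt_vesselMoment_t hσ₁inv (hXinv x) (hXinv' x) (hBt x t) (hCt x t) (hXt x t)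
      (hLyap x t) n

/-- **t-evolution of the moments of a KdV vessel (bounded case):**
with `H_n(x,t) = C X⁻¹ Aⁿ B`, one has
`∂ₜ H_n = i ∂ₓ H_{n+1} + i ∂ₓ[H₀] σ₁ H_n`. -/
theorem kdv_moment_t_evolution
    {H : Type*} [NormedAddCommGroup H] [InnerProductSpace ℂ H] [CompleteSpace H]
    (σ₁ σ₁inv σ₂ γ : (Fin 2 → ℂ) →L[ℂ] (Fin 2 → ℂ))
    (hσ₁ : σ₁ ∘L σ₁inv = 1) (hσ₁inv : σ₁inv ∘L σ₁ = 1)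
    (A Aζ : H →L[ℂ] H)
    (B : ℝ → ℝ → ((Fin 2 → ℂ) →L[ℂ] H))
    (C : ℝ → ℝ → (H →L[ℂ] (Fin 2 → ℂ)))
    (X Xinv : ℝ → ℝ → (H →L[ℂ] H))
    (hXinv : ∀ x t : ℝ, X x t ∘L Xinv x t = 1)
    (hXinv' : ∀ x t : ℝ, Xinv x t ∘L X x t = 1)
    (hBx : ∀ x t : ℝ, HasDerivAt (fun y => B y t)
      ((-((A ∘L B x t) ∘L σ₂ + B x t ∘L γ)) ∘L σ₁inv) x)
    (hCx : ∀ x t : ℝ, HasDerivAt (fun y => C y t)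
      (σ₁inv ∘L (-(σ₂ ∘L (C x t ∘L Aζ)) + γ ∘L C x t)) x)
    (hXx : ∀ x t : ℝ, HasDerivAt (fun y => X y t) ((B x t ∘L σ₂) ∘L C x t) x)
    (hBt : ∀ x t : ℝ, HasDerivAt (fun s => B x s)
      ((-Complex.I) • (A ∘L (((A ∘L B x t) ∘L σ₂ + B x t ∘L γ) ∘L σ₁inv))) t)
    (hCt : ∀ x t : ℝ, HasDerivAt (fun s => C x s)
      ((-Complex.I) • ((σ₁inv ∘L (-(σ₂ ∘L (C x t ∘L Aζ)) + γ ∘L C x t)) ∘L Aζ)) t)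
    (hXt : ∀ x t : ℝ, HasDerivAt (fun s => X x s)
      (Complex.I • (A ∘L ((B x t ∘L σ₂) ∘L C x t)
        - ((B x t ∘L σ₂) ∘L C x t) ∘L Aζ + (B x t ∘L γ) ∘L C x t)) t)
    (hLyap : ∀ x t : ℝ, A ∘L X x t + X x t ∘L Aζ + (B x t ∘L σ₁) ∘L C x t = 0) :
    ∃ Hx : ℕ → ℝ → ℝ → ((Fin 2 → ℂ) →L[ℂ] (Fin 2 → ℂ)),
      (∀ (n : ℕ) (x t : ℝ),
        HasDerivAt (fun y => C y t ∘L (Xinv y t ∘L ((A ^ n) ∘L B y t))) (Hx n x t) x) ∧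
      (∀ (n : ℕ) (x t : ℝ),
        HasDerivAt (fun s => C x s ∘L (Xinv x s ∘L ((A ^ n) ∘L B x s)))
          (Complex.I • Hx (n + 1) x t +
            Complex.I • ((Hx 0 x t ∘L σ₁) ∘L
              (C x t ∘L (Xinv x t ∘L ((A ^ n) ∘L B x t))))) t) :=
  kdv_moment_t_evolution_general σ₁ σ₁inv σ₂ γ hσ₁inv A Aζ B C X Xinv hXinv hXinv' hBx hCx hXx hBt
    hCt hXt hLyap
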